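/- arXiv:2005.13339 — 2 statements merged into one kernel-verified Lean document; each statement's English description precedes it below -/
import Mathlib

section
/- (Soundness of Merkle membership proofs) Assume the hashing is collision-free. Let k : ℕ, let X : List α with X.length = 2^k, let i < 2^k, let x : α, and let π : List β with π.length = k. If π verifies (i, x) against MkRoot k X (i.e., Rec k i x π = MkRoot k X), then x = X.get i. -/
/-! Induction on the height `k`: at height `k + 1` the verification equation equates two values
of `h`, so collision-freeness of `h` reduces it to the verification equation in the half of `X`
containing index `i`; at height `0` injectivity of `ℓ` identifies `x` with the only leaf. -/

variable {α β : Type*}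

/-- Merkle root of a list of length `2^k` (junk value otherwise). -/
def MkRoot [Inhabited α] (ℓ : α → β) (h : β → β → β) : ℕ → List α → β
  | 0, X => ℓ X.headI
  | k + 1, X => h (MkRoot ℓ h k (X.take (2 ^ k))) (MkRoot ℓ h k (X.drop (2 ^ k)))

/-- Root reconstruction from an authentication path, listed from the root
level down to the leaf level (junk value on ill-formed input). -/
def Rec (ℓ : α → β) (h : β → β → β) : ℕ → ℕ → α → List β → β
  | 0, _, x, _ => ℓ x
  | _ + 1, _, x, [] => ℓ x
  | k + 1, i, x, s :: π =>
    if i < 2 ^ k then h (Rec ℓ h k i x π) s else h s (Rec ℓ h k (i - 2 ^ k) x π)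

theorem List.length_take_two_pow {X : List α} {k : ℕ} (hX : X.length = 2 ^ (k + 1)) :
    (X.take (2 ^ k)).length = 2 ^ k := by
  rw [List.length_take, hX, pow_succ]
  omega

theorem List.length_drop_two_pow {X : List α} {k : ℕ} (hX : X.length = 2 ^ (k + 1)) :
    (X.drop (2 ^ k)).length = 2 ^ k := by
  rw [List.length_drop, hX, pow_succ]
  omega

theorem getElem?_eq_some_of_rec_eq_mkRoot [Inhabited α] {ℓ : α → β} {h : β → β → β}
    (hℓ : Function.Injective ℓ) (hh : Function.Injective2 h) (x : α) :
    ∀ (k : ℕ) (X : List α) (i : ℕ) (π : List β), X.length = 2 ^ k → i < 2 ^ k →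
      π.length = k → Rec ℓ h k i x π = MkRoot ℓ h k X → X[i]? = some x
  | 0, X, i, _, hX, hi, _, hver => by
    obtain ⟨a, rfl⟩ := List.length_eq_one_iff.mp hX
    obtain rfl : i = 0 := by omega
    simp only [Rec, MkRoot, List.headI_cons] at hver
    simp [hℓ hver]
  | k + 1, X, i, s :: π, hX, hi, hπ, hver => by
    have hπ : π.length = k := by simpa using hπ
    rw [MkRoot] at hver
    by_cases hleft : i < 2 ^ k
    · rw [Rec, if_pos hleft] at hver
      have hX₁ := getElem?_eq_some_of_rec_eq_mkRoot hℓ hh x k _ i π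
        (List.length_take_two_pow hX) hleft hπ (hh hver).1
      rwa [List.getElem?_take_of_lt hleft] at hX₁
    · rw [Rec, if_neg hleft] at hver
      have hi' : i - 2 ^ k < 2 ^ k := by rw [pow_succ] at hi; omega
      have hX₂ := getElem?_eq_some_of_rec_eq_mkRoot hℓ hh x k _ (i - 2 ^ k) π
        (List.length_drop_two_pow hX) hi' hπ (hh hver).2
      rwa [List.getElem?_drop, Nat.add_sub_cancel' (by omega)] at hX₂

theorem merkle_proof_sound [Inhabited α] (ℓ : α → β) (h : β → β → β)
    (hℓ : Function.Injective ℓ)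
    (hh : ∀ b₁ b₂ b₁' b₂' : β, h b₁ b₂ = h b₁' b₂' → b₁ = b₁' ∧ b₂ = b₂')
    (k : ℕ) (X : List α) (hX : X.length = 2 ^ k) (i : ℕ) (hi : i < 2 ^ k)
    (x : α) (π : List β) (hπ : π.length = k)
    (hver : Rec ℓ h k i x π = MkRoot ℓ h k X) : x = X.get ⟨i, by omega⟩ := by
  have hh₂ : Function.Injective2 h := fun _ _ _ _ e => hh _ _ _ _ e
  have hXi := getElem?_eq_some_of_rec_eq_mkRoot hℓ hh₂ x k X i π hX hi hπ hver
  rw [List.getElem?_eq_some_iff] at hXi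
  exact hXi.2.symm
end

section
/- (Soundness of incremental consistency proofs; core of the paper's consistency theorem that the ledger can only be extended, never rewritten) Assume the hashing is collision-free. Let a ≤ b be natural numbers, let X : List α with X.length = 2^a, and let X' : List α with X'.length = 2^b. If there exists a list S : List β with S.length = b - a such that S.foldl h (MkRoot a X) = MkRoot b X', then X = X'.take 2^a; in particular, X is a prefix of X'. -/
/-!
Collision-freeness makes the Merkle root of level `k` injective on lists of length `2 ^ k`.
A consistency proof only ever hangs the current root as the left child of a new root, so
cancelling on the left through the fold shows that `MkRoot a X` is the root of the first
`2 ^ a` blocks of `X'`; injectivity then gives `X = X'.take (2 ^ a)`.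
-/

variable {α β : Type*}

section MerkleRoot

variable [Inhabited α] {ℓ : α → β} {h : β → β → β}

theorem MkRoot_take (k : ℕ) (X : List α) : MkRoot ℓ h k (X.take (2 ^ k)) = MkRoot ℓ h k X := by
  induction k generalizing X with
  | zero => cases X <;> rfl
  | succ k ih =>
    have hk : 2 ^ k ≤ 2 ^ (k + 1) := Nat.pow_le_pow_right two_pos k.le_succ
    rw [MkRoot, MkRoot, List.take_take, min_eq_left hk, List.drop_take,
      show 2 ^ (k + 1) - 2 ^ k = 2 ^ k by rw [pow_succ]; omega, ih, ih]

theorem MkRoot_injOn (hℓ : Function.Injective ℓ)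
    (hh : ∀ b₁ b₂ b₁' b₂' : β, h b₁ b₂ = h b₁' b₂' → b₁ = b₁' ∧ b₂ = b₂') (k : ℕ) :
    Set.InjOn (MkRoot ℓ h k) {X | X.length = 2 ^ k} := by
  induction k with
  | zero =>
    rintro X hX Y hY hXY
    obtain ⟨x, rfl⟩ := List.length_eq_one_iff.mp hX
    obtain ⟨y, rfl⟩ := List.length_eq_one_iff.mp hY
    simpa using hℓ hXY
  | succ k ih =>
    rintro X (hX : X.length = 2 ^ (k + 1)) Y (hY : Y.length = 2 ^ (k + 1)) hXY
    obtain ⟨hleft, hright⟩ := hh _ _ _ _ hXY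
    have hk : 2 ^ k ≤ 2 ^ (k + 1) := Nat.pow_le_pow_right two_pos k.le_succ
    have htake := ih (by simp [hX, hk]) (by simp [hY, hk]) hleft
    have hdrop := ih (by simp [hX, pow_succ]; omega) (by simp [hY, pow_succ]; omega) hright
    rw [← List.take_append_drop (2 ^ k) X, ← List.take_append_drop (2 ^ k) Y, htake, hdrop]

theorem eq_MkRoot_take_of_foldl_eq (hh : ∀ b₁ b₂ b₁' b₂' : β, h b₁ b₂ = h b₁' b₂' → b₁ = b₁')
    (S : List β) (r : β) (k : ℕ) (X' : List α)
    (hS : S.foldl h r = MkRoot ℓ h (k + S.length) X') :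
    r = MkRoot ℓ h k (X'.take (2 ^ k)) := by
  induction S generalizing r k with
  | nil => simpa [MkRoot_take] using hS
  | cons s S ih =>
    rw [List.foldl_cons, List.length_cons, ← add_assoc, add_right_comm] at hS
    have hstep := ih (h r s) (k + 1) hS
    rw [MkRoot, List.take_take, min_eq_left (Nat.pow_le_pow_right two_pos k.le_succ)] at hstep
    exact hh _ _ _ _ hstep

end MerkleRoot

theorem history_tree_incremental_sound [Inhabited α] (ℓ : α → β) (h : β → β → β)
    (hℓ : Function.Injective ℓ)
    (hh : ∀ b₁ b₂ b₁' b₂' : β, h b₁ b₂ = h b₁' b₂' → b₁ = b₁' ∧ b₂ = b₂')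
    (a b : ℕ) (hab : a ≤ b) (X X' : List α)
    (hX : X.length = 2 ^ a) (hX' : X'.length = 2 ^ b)
    (hS : ∃ S : List β, S.length = b - a ∧ S.foldl h (MkRoot ℓ h a X) = MkRoot ℓ h b X') :
    X = X'.take (2 ^ a) ∧ X <+: X' := by
  obtain ⟨S, hSlen, hfold⟩ := hS
  rw [show b = a + S.length by omega] at hfold
  have hroot := eq_MkRoot_take_of_foldl_eq (fun _ _ _ _ e => (hh _ _ _ _ e).1) S _ a X' hfold
  have hlen : (X'.take (2 ^ a)).length = 2 ^ a := by
    simp [hX', Nat.pow_le_pow_right two_pos hab]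
  have hX_eq := MkRoot_injOn hℓ hh a hX hlen hroot
  exact ⟨hX_eq, hX_eq ▸ List.take_prefix _ _⟩
end
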